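/- Let n ∈ ℕ and for each k < n let z_k be a 3×3 complex matrix whose off-diagonal entries are all equal to a common value z_k^m, and let I_k ∈ ℂ³ satisfy (I_k)₁ + (I_k)₂ + (I_k)₃ = 0. Let V₀ ∈ ℂ³ and define the three-phase node voltage V_n := V₀ − Σ_{k<n} z_k · I_k. Then for each phase index φ ∈ {1,2,3}, the φ-th component of V_n equals (V₀)_φ − Σ_{k<n} ((z_k)_{φφ} − z_k^m)·(I_k)_φ. In other words, the per-phase voltage computed along the path using the modified scalar impedances (z_k)_{φφ} − z_k^m coincides exactly with the φ-th component of the three-phase voltage. -/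
import Mathlib


open Matrix

/-- Theorem 1 of the paper. Along a path of `n` branches in a
radial three-phase feeder, if each branch impedance matrix `z k` has all
off-diagonal entries equal to a common mutual impedance `zm k` (transposed
lines) and each branch current vector `I k` sums to zero across the three
phases (balanced load currents), then each phase component of the three-phase
node voltage `V_n = V₀ - ∑_{k<n} z k · I k` coincides with the per-phase
voltage computed with the modified scalar impedances `(z k) φ φ - zm k`. -/
theorem per_phase_voltage_eq_three_phase_voltage
    (n : ℕ) (z : Fin n → Matrix (Fin 3) (Fin 3) ℂ) (zm : Fin n → ℂ)
    (I : Fin n → Fin 3 → ℂ) (V₀ : Fin 3 → ℂ)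
    (hmut : ∀ k : Fin n, ∀ i j : Fin 3, i ≠ j → z k i j = zm k)
    (hbal : ∀ k : Fin n, I k 0 + I k 1 + I k 2 = 0) :
    ∀ φ : Fin 3,
      (V₀ - ∑ k : Fin n, (z k).mulVec (I k)) φ =
        V₀ φ - ∑ k : Fin n, (z k φ φ - zm k) * I k φ := by
  intro φ
  simp only [Pi.sub_apply, Finset.sum_apply]
  congr 1
  apply Finset.sum_congr rfl
  intro k _
  have hb := hbal k
  fin_cases φ <;>
    simp [mulVec, dotProduct, Fin.sum_univ_three,
      hmut k 0 1 (by decide), hmut k 0 2 (by decide),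
      hmut k 1 0 (by decide), hmut k 1 2 (by decide),
      hmut k 2 0 (by decide), hmut k 2 1 (by decide)] <;>
    linear_combination zm k * hb
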